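/- Any tight finite game has a completely mixed Nash equilibrium, i.e. a Nash equilibrium σ with σ_i(c_i) > 0 for every player i and every pure strategy c_i ∈ C_i. -/

import Mathlib

open scoped BigOperators

section Prelim

variable {S : Type} [Fintype S] [DecidableEq S]

/-- `σ` is a mixed strategy (probability distribution) on the finite set `S`. -/
def IsMixed (σ : S → ℝ) : Prop := (∀ s, 0 ≤ σ s) ∧ ∑ s, σ s = 1

/-- The Dirac measure `δ_s`. -/
def dirac (s : S) : S → ℝ := fun d => if d = s then 1 else 0

/-- `α_i * σ_i`, the image of the mixed strategy `σ` under the deviation plan `αᵢ`,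
where `αᵢ c d` is the probability `αᵢ(d | c)`. -/
def devImage (αᵢ : S → S → ℝ) (σ : S → ℝ) : S → ℝ := fun d => ∑ c, σ c * αᵢ c d

/-- `σ` is `αᵢ`-stationary: `αᵢ * σ = σ`. -/
def IsStationaryDist (αᵢ : S → S → ℝ) (σ : S → ℝ) : Prop := devImage αᵢ σ = σ

/-- A nonempty `B ⊆ S` is `αᵢ`-absorbing if `supp (αᵢ * c) ⊆ B` for all `c ∈ B`. -/
def IsAbsorbing (αᵢ : S → S → ℝ) (B : Finset S) : Prop :=
  B.Nonempty ∧ ∀ c ∈ B, ∀ d, 0 < αᵢ c d → d ∈ B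

/-- A minimal absorbing set: an absorbing set containing no proper nonempty absorbing subset. -/
def IsMinimalAbsorbing (αᵢ : S → S → ℝ) (B : Finset S) : Prop :=
  IsAbsorbing αᵢ B ∧ ∀ B' ⊆ B, IsAbsorbing αᵢ B' → B' = B

/-- `C_i/α_i`: the set of `αᵢ`-stationary mixed strategies whose support is contained
in some minimal `αᵢ`-absorbing set. -/
def ReducedSet (αᵢ : S → S → ℝ) : Set (S → ℝ) :=
  {σ | IsMixed σ ∧ IsStationaryDist αᵢ σ ∧
    ∃ B : Finset S, IsMinimalAbsorbing αᵢ B ∧ ∀ s, σ s ≠ 0 → s ∈ B}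

end Prelim

section Games

variable {N : Type} [Fintype N] [DecidableEq N]
  {C : N → Type} [∀ i, Fintype (C i)] [∀ i, DecidableEq (C i)]

/-- Marginal probability of the pure strategy `cᵢ` of player `i` under `μ`. -/
def marginal (μ : (∀ j, C j) → ℝ) (i : N) (cᵢ : C i) : ℝ :=
  ∑ c : ∀ j, C j, if c i = cᵢ then μ c else 0

/-- The incentive sum `∑_{c_{-i}} μ(c_{-i},cᵢ)[U_i(c_{-i},dᵢ) − U_i(c_{-i},cᵢ)]`. -/
def incentiveSum (U : ∀ i : N, (∀ j, C j) → ℝ) (μ : (∀ j, C j) → ℝ) (i : N) (cᵢ dᵢ : C i) : ℝ :=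
  ∑ c : ∀ j, C j, if c i = cᵢ then μ c * (U i (Function.update c i dᵢ) - U i c) else 0

/-- Correlated equilibrium. -/
def IsCorrelatedEq (U : ∀ i : N, (∀ j, C j) → ℝ) (μ : (∀ j, C j) → ℝ) : Prop :=
  (∀ c, 0 ≤ μ c) ∧ (∑ c : ∀ j, C j, μ c) = 1 ∧
    ∀ (i : N) (cᵢ dᵢ : C i), incentiveSum U μ i cᵢ dᵢ ≤ 0

/-- Multilinear extension: payoff of player `i` under the mixed strategy profile `σ`. -/
def mixedPayoff (U : ∀ i : N, (∀ j, C j) → ℝ) (σ : ∀ j, C j → ℝ) (i : N) : ℝ :=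
  ∑ c : ∀ j, C j, (∏ j, σ j (c j)) * U i c

/-- Nash equilibrium. -/
def IsNash (U : ∀ i : N, (∀ j, C j) → ℝ) (σ : ∀ j, C j → ℝ) : Prop :=
  (∀ i, IsMixed (σ i)) ∧
  ∀ (i : N) (dᵢ : C i),
    mixedPayoff U (Function.update σ i (dirac dᵢ)) i ≤ mixedPayoff U σ i

/-- `D(c, α) = ∑_i [U_i(c_{-i}, α_i * c_i) − U_i(c)]`. -/
def devGain (U : ∀ i : N, (∀ j, C j) → ℝ) (α : ∀ i, C i → C i → ℝ) (c : ∀ j, C j) : ℝ :=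
  ∑ i, ((∑ dᵢ, α i (c i) dᵢ * U i (Function.update c i dᵢ)) - U i c)

/-- A dual vector: a profile of deviation plans with `D(c,α) ≥ 0` for all `c`. -/
def IsDualVector (U : ∀ i : N, (∀ j, C j) → ℝ) (α : ∀ i, C i → C i → ℝ) : Prop :=
  (∀ (i : N) (cᵢ : C i), IsMixed (α i cᵢ)) ∧ ∀ c, 0 ≤ devGain U α c

/-- A strong dual vector: `D(c,α) > 0` whenever `c` has probability zero in all
correlated equilibria. -/
def IsStrong (U : ∀ i : N, (∀ j, C j) → ℝ) (α : ∀ i, C i → C i → ℝ) : Prop :=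
  ∀ c : ∀ j, C j, (∀ μ, IsCorrelatedEq U μ → μ c = 0) → 0 < devGain U α c

/-- A full dual vector: `α_i(dᵢ|cᵢ) > 0` whenever `β_i(dᵢ|cᵢ) > 0` for some dual vector `β`. -/
def IsFull (U : ∀ i : N, (∀ j, C j) → ℝ) (α : ∀ i, C i → C i → ℝ) : Prop :=
  ∀ (i : N) (cᵢ dᵢ : C i),
    (∃ β : ∀ i, C i → C i → ℝ, IsDualVector U β ∧ 0 < β i cᵢ dᵢ) → 0 < α i cᵢ dᵢ

end Games

/-- A game is tight if every correlated equilibrium satisfies all incentive constraints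
with equality. -/
def IsTight {N : Type} [Fintype N] [DecidableEq N]
    {C : N → Type} [∀ i, Fintype (C i)] [∀ i, DecidableEq (C i)]
    (U : ∀ i : N, (∀ j, C j) → ℝ) : Prop :=
  ∀ μ, IsCorrelatedEq U μ → ∀ (i : N) (cᵢ dᵢ : C i), incentiveSum U μ i cᵢ dᵢ = 0

/-!
Tightness and Farkas' lemma give strictly positive weights `y` on all incentive constraints
whose weighted sum of incentive coefficients is nonnegative at every pure profile: if the
constraint `(i, cᵢ, dᵢ)` could not receive positive weight, some (unnormalized) correlated
equilibrium would satisfy it strictly. Uniformizing `y` turns it into a dual vector `α` whose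
deviation plans `αᵢ` are strictly positive stochastic matrices, and each `αᵢ` has a strictly
positive stationary distribution `σᵢ`. Averaging `D(·, α) ≥ 0` against the product distribution
in which player `i` plays `b` and the others play `σⱼ`, the terms of the other players cancel by
stationarity, so the payoff of `i` against `σ₋ᵢ` is `αᵢ`-subharmonic. A subharmonic function of a
strictly positive stochastic matrix is constant, hence `σ` is a Nash equilibrium.
-/

open Finset Function

lemma Finset.exists_min_ratio {ι : Type*} {s : Finset ι} {f g : ι → ℝ}
    (hf : ∀ i ∈ s, 0 ≤ f i) (hg : ∃ i ∈ s, 0 < g i) :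
    ∃ a ∈ s, 0 < g a ∧ ∀ i ∈ s, f a / g a * g i ≤ f i := by
  obtain ⟨b, hb, hgb⟩ := hg
  obtain ⟨a, ha, hmin⟩ := (s.filter (0 < g ·)).exists_min_image (fun i => f i / g i)
    ⟨b, mem_filter.2 ⟨hb, hgb⟩⟩
  rw [mem_filter] at ha
  refine ⟨a, ha.1, ha.2, fun i hi => ?_⟩
  rcases lt_or_ge 0 (g i) with hgi | hgi
  · exact (le_div_iff₀ hgi).1 (hmin i (mem_filter.2 ⟨hi, hgi⟩))
  · exact (mul_nonpos_of_nonneg_of_nonpos (div_nonneg (hf a ha.1) ha.2.le) hgi).trans (hf i hi)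

namespace PointedCone

variable {E : Type*} [AddCommGroup E] [Module ℝ E]

lemma mem_hull_finset_iff {s : Finset E} {x : E} :
    x ∈ hull ℝ (s : Set E) ↔ ∃ f : E → ℝ, (∀ a ∈ s, 0 ≤ f a) ∧ ∑ a ∈ s, f a • a = x := by
  constructor
  · rw [Submodule.mem_span_finset]
    rintro ⟨f, -, rfl⟩
    exact ⟨fun a => f a, fun a _ => (f a).2, by simp⟩
  · rintro ⟨f, hf, rfl⟩
    exact Submodule.sum_mem _ fun a ha => smul_mem _ (hf a ha) (subset_hull ha)

lemma exists_mem_hull_erase_of_not_linearIndepOn [DecidableEq E] {s : Finset E} {x : E}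
    (hs : ¬LinearIndepOn ℝ id (s : Set E)) (hx : x ∈ hull ℝ (s : Set E)) :
    ∃ a ∈ s, x ∈ hull ℝ (s.erase a : Set E) := by
  obtain ⟨f, hf, rfl⟩ := mem_hull_finset_iff.1 hx
  have of_relation : ∀ g : E → ℝ, ∑ a ∈ s, g a • a = 0 → (∃ b ∈ s, 0 < g b) →
      ∃ a ∈ s, ∑ a ∈ s, f a • a ∈ hull ℝ (s.erase a : Set E) := by
    intro g hg hpos
    obtain ⟨a, ha, hga, hle⟩ := exists_min_ratio hf hpos
    set f' := fun i => f i - f a / g a * g i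
    refine ⟨a, ha, mem_hull_finset_iff.2
      ⟨f', fun i hi => sub_nonneg.2 (hle i (mem_of_mem_erase hi)), ?_⟩⟩
    rw [sum_erase _ (by simp [f', div_mul_cancel₀ _ hga.ne'])]
    simp only [f', sub_smul, sum_sub_distrib, mul_smul, ← smul_sum, hg, smul_zero, sub_zero]
  simp only [linearIndepOn_finset_iff, id, not_forall] at hs
  obtain ⟨g, hg, b, hb, hgb⟩ := hs
  rcases Ne.lt_or_gt hgb with hneg | hpos
  · exact of_relation (-g) (by simp [hg]) ⟨b, hb, neg_pos.2 hneg⟩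
  · exact of_relation g hg ⟨b, hb, hpos⟩

variable [TopologicalSpace E] [IsTopologicalAddGroup E] [ContinuousSMul ℝ E] [T2Space E]

lemma isClosed_hull_of_linearIndepOn {s : Finset E} (hs : LinearIndepOn ℝ id (s : Set E)) :
    IsClosed (hull ℝ (s : Set E) : Set E) := by
  set L := Fintype.linearCombination ℝ (Subtype.val : s → E)
  have hL : (hull ℝ (s : Set E) : Set E) = L '' Set.Ici 0 := by
    ext x
    simp only [SetLike.mem_coe, Submodule.mem_span_finset', Set.mem_image, Set.mem_Ici,
      L, Fintype.linearCombination_apply]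
    constructor
    · rintro ⟨f, rfl⟩
      exact ⟨fun a => f a, fun a => (f a).2, by simp⟩
    · rintro ⟨f, hf, rfl⟩
      exact ⟨fun a => ⟨f a, hf a⟩, by simp⟩
  rw [hL]
  exact (L.isClosedEmbedding_of_injective (LinearMap.ker_eq_bot.2
    hs.fintypeLinearCombination_injective)).isClosedMap _ isClosed_Ici

theorem isClosed_hull_finset (s : Finset E) : IsClosed (hull ℝ (s : Set E) : Set E) := by
  classical
  induction s using Finset.strongInduction with
  | H s ih =>
  by_cases hs : LinearIndepOn ℝ id (s : Set E)
  · exact isClosed_hull_of_linearIndepOn hs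
  · have : (hull ℝ (s : Set E) : Set E) = ⋃ a ∈ s, (hull ℝ (s.erase a : Set E) : Set E) := by
      refine Set.Subset.antisymm (fun x hx => ?_) (Set.iUnion₂_subset fun a _ => ?_)
      · obtain ⟨a, ha, hxa⟩ := exists_mem_hull_erase_of_not_linearIndepOn hs hx
        exact Set.mem_iUnion₂.2 ⟨a, ha, hxa⟩
      · exact Submodule.span_mono (by simp)
    rw [this]
    exact isClosed_biUnion_finset fun a ha => ih _ (erase_ssubset ha)

variable [LocallyConvexSpace ℝ E]

theorem exists_dual_of_notMem_hull {s : Set E} (hs : s.Finite) {b : E} (hb : b ∉ hull ℝ s) :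
    ∃ f : StrongDual ℝ E, (∀ x ∈ s, 0 ≤ f x) ∧ f b < 0 := by
  have hclosed : IsClosed (hull ℝ s : Set E) := by
    simpa using isClosed_hull_finset hs.toFinset
  obtain ⟨f, hf, hfb⟩ := ProperCone.hyperplane_separation_point ⟨hull ℝ s, hclosed⟩ hb
  exact ⟨f, fun x hx => hf x (subset_hull hx), hfb⟩

end PointedCone

lemma dotProduct_apply_single {T : Type*} [Fintype T] [DecidableEq T] (f : (T → ℝ) →ₗ[ℝ] ℝ)
    (x : T → ℝ) : (fun t => f (Pi.single t 1)) ⬝ᵥ x = f x := by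
  rw [LinearMap.pi_apply_eq_sum_univ f x, dotProduct]
  refine Finset.sum_congr rfl fun t _ => ?_
  rw [smul_eq_mul, mul_comm]
  congr 2
  ext j
  simp [Pi.single_apply, eq_comm]

section Markov

variable {S : Type} [Fintype S] {P : S → S → ℝ}

noncomputable def uniformize [DecidableEq S] (Q : S → S → ℝ) (M : ℝ) : S → S → ℝ :=
  fun a b => Q a b / M + if b = a then 1 - (∑ e, Q a e) / M else 0

lemma uniformize_pos [DecidableEq S] {Q : S → S → ℝ} {M : ℝ} (hQ : ∀ a b, 0 < Q a b)
    (hM : ∀ a, ∑ e, Q a e < M) (a b : S) : 0 < uniformize Q M a b := by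
  have hM0 : 0 < M := (sum_pos (fun e _ => hQ a e) ⟨a, mem_univ a⟩).trans (hM a)
  have hdiag : 0 ≤ 1 - (∑ e, Q a e) / M := sub_nonneg.2 ((div_le_one hM0).2 (hM a).le)
  unfold uniformize
  split_ifs
  · exact add_pos_of_pos_of_nonneg (div_pos (hQ a b) hM0) hdiag
  · simpa using div_pos (hQ a b) hM0

lemma sum_uniformize [DecidableEq S] (Q : S → S → ℝ) (M : ℝ) (a : S) :
    ∑ b, uniformize Q M a b = 1 := by
  simp only [uniformize, sum_add_distrib, sum_ite_eq', mem_univ, if_true, ← sum_div]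
  ring

lemma sum_uniformize_mul_sub [DecidableEq S] (Q : S → S → ℝ) (M : ℝ) (f : S → ℝ) (a : S) :
    ∑ b, uniformize Q M a b * f b - f a = (∑ b, Q a b * (f b - f a)) / M := by
  have hsum : ∑ b, uniformize Q M a b * f b
      = (∑ b, Q a b * f b) / M + (1 - (∑ e, Q a e) / M) * f a := by
    simp [uniformize, add_mul, sum_add_distrib, sum_div, div_mul_eq_mul_div]
  simp only [hsum, mul_sub, sum_sub_distrib, ← sum_mul]
  ring

lemma sum_mul_dirac [DecidableEq S] (ρ : S → ℝ) (x : S) : ∑ d, ρ d * dirac d x = ρ x := by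
  simp [dirac]

lemma devImage_dirac [DecidableEq S] (P : S → S → ℝ) (b : S) : devImage P (dirac b) = P b := by
  ext d
  simp [devImage, dirac]

lemma exists_ne_zero_isStationaryDist [Nonempty S] (hrow : ∀ a, ∑ b, P a b = 1) :
    ∃ w ≠ 0, IsStationaryDist P w := by
  classical
  have hdet : (Matrix.of P - 1).det = 0 := by
    refine Matrix.exists_mulVec_eq_zero_iff.1 ⟨1, one_ne_zero, ?_⟩
    rw [Matrix.sub_mulVec, Matrix.one_mulVec, sub_eq_zero]
    ext a
    simp [Matrix.mulVec, dotProduct, hrow]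
  obtain ⟨w, hw, hwP⟩ := Matrix.exists_vecMul_eq_zero_iff.2 hdet
  refine ⟨w, hw, ?_⟩
  rw [Matrix.vecMul_sub, Matrix.vecMul_one, sub_eq_zero] at hwP
  exact hwP

lemma IsStationaryDist.abs {w : S → ℝ} (hP : ∀ a b, 0 ≤ P a b) (hrow : ∀ a, ∑ b, P a b = 1)
    (hw : IsStationaryDist P w) : IsStationaryDist P fun s => |w s| := by
  have hle : ∀ d, |w d| ≤ devImage P (fun s => |w s|) d := fun d =>
    calc |w d| = |∑ c, w c * P c d| := by rw [← congrFun hw d]; rfl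
      _ ≤ ∑ c, |w c * P c d| := abs_sum_le_sum_abs _ _
      _ = devImage P (fun s => |w s|) d := by simp [devImage, abs_mul, abs_of_nonneg (hP _ _)]
  have hsum : ∑ d, |w d| = ∑ d, devImage P (fun s => |w s|) d := by
    simp only [devImage]
    rw [sum_comm]
    simp [← mul_sum, hrow]
  funext d
  exact ((sum_eq_sum_iff_of_le fun d _ => hle d).1 hsum d (mem_univ d)).symm

theorem exists_pos_isStationaryDist [Nonempty S] (hP : ∀ a b, 0 < P a b)
    (hrow : ∀ a, ∑ b, P a b = 1) : ∃ σ, IsMixed σ ∧ IsStationaryDist P σ ∧ ∀ s, 0 < σ s := by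
  obtain ⟨w, hw, hwP⟩ := exists_ne_zero_isStationaryDist hrow
  set u : S → ℝ := fun s => |w s|
  have hu : IsStationaryDist P u := hwP.abs (fun a b => (hP a b).le) hrow
  obtain ⟨s₀, hs₀⟩ : ∃ s₀, 0 < u s₀ := by
    by_contra! h
    exact hw (funext fun s => abs_nonpos_iff.1 (h s))
  have hupos : ∀ d, 0 < u d := fun d =>
    calc 0 < u s₀ * P s₀ d := mul_pos hs₀ (hP s₀ d)
      _ ≤ devImage P u d := single_le_sum (f := fun c => u c * P c d)
          (fun c _ => mul_nonneg (abs_nonneg _) (hP c d).le) (mem_univ s₀)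
      _ = u d := congrFun hu d
  have htot : 0 < ∑ s, u s := sum_pos (fun s _ => hupos s) ⟨s₀, mem_univ s₀⟩
  refine ⟨fun s => u s / ∑ s, u s, ⟨fun s => (div_pos (hupos s) htot).le, ?_⟩, ?_,
    fun s => div_pos (hupos s) htot⟩
  · rw [← sum_div, div_self htot.ne']
  · funext d
    simp only [devImage, div_mul_eq_mul_div, ← sum_div]
    exact congrArg (· / ∑ s, u s) (congrFun hu d)

lemma eq_of_forall_le_sum_mul {W : S → ℝ}
    (hP : ∀ a b, 0 < P a b) (hrow : ∀ a, ∑ b, P a b = 1) (hW : ∀ a, W a ≤ ∑ b, P a b * W b)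
    (a b : S) : W a = W b := by
  obtain ⟨m, -, hm⟩ := exists_max_image univ W ⟨a, mem_univ a⟩
  have hle : ∀ d ∈ univ, P m d * W d ≤ P m d * W m := fun d _ =>
    mul_le_mul_of_nonneg_left (hm d (mem_univ d)) (hP m d).le
  have heq : ∑ d, P m d * W d = ∑ d, P m d * W m :=
    le_antisymm (sum_le_sum hle) (by rw [← sum_mul, hrow, one_mul]; exact hW m)
  have hmax : ∀ d, W d = W m := fun d =>
    mul_left_cancel₀ (hP m d).ne' ((sum_eq_sum_iff_of_le hle).1 heq d (mem_univ d))
  rw [hmax a, hmax b]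

end Markov

section Dual

variable {N : Type} [Fintype N] [DecidableEq N]
  {C : N → Type} [∀ i, Fintype (C i)] [∀ i, DecidableEq (C i)]

def incentiveVec (U : N → (∀ j, C j) → ℝ) (c : ∀ j, C j) : (Σ i : N, C i × C i) → ℝ :=
  fun t => if c t.1 = t.2.1 then U t.1 (update c t.1 t.2.2) - U t.1 c else 0

lemma incentiveSum_eq_sum_smul_incentiveVec (U : N → (∀ j, C j) → ℝ)
    (μ : (∀ j, C j) → ℝ) (i : N) (a b : C i) :
    incentiveSum U μ i a b = (∑ c, μ c • incentiveVec U c) ⟨i, (a, b)⟩ := by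
  simp [incentiveSum, incentiveVec, Finset.sum_apply, mul_ite]

lemma dotProduct_incentiveVec (U : N → (∀ j, C j) → ℝ) (y : (Σ i : N, C i × C i) → ℝ)
    (c : ∀ j, C j) :
    y ⬝ᵥ incentiveVec U c = ∑ i, ∑ d, y ⟨i, (c i, d)⟩ * (U i (update c i d) - U i c) := by
  rw [dotProduct, Fintype.sum_sigma]
  refine sum_congr rfl fun i _ => ?_
  rw [Fintype.sum_prod_type, sum_comm]
  simp [incentiveVec, mul_ite]

theorem IsTight.sum_smul_incentiveVec_eq_zero {U : N → (∀ j, C j) → ℝ} (htight : IsTight U)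
    {x : (∀ j, C j) → ℝ} (hx : ∀ c, 0 ≤ x c) (hle : ∑ c, x c • incentiveVec U c ≤ 0) :
    ∑ c, x c • incentiveVec U c = 0 := by
  rcases (sum_nonneg fun c _ => hx c).eq_or_lt with hsum | hsum
  · have hx0 : ∀ c, x c = 0 := fun c =>
      (sum_eq_zero_iff_of_nonneg fun c _ => hx c).1 hsum.symm c (mem_univ c)
    simp [hx0]
  · set μ := fun c => (∑ c, x c)⁻¹ * x c
    have hμ : ∑ c, μ c • incentiveVec U c = (∑ c, x c)⁻¹ • ∑ c, x c • incentiveVec U c := by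
      simp [μ, smul_sum, smul_smul]
    have hCE : IsCorrelatedEq U μ := by
      refine ⟨fun c => mul_nonneg (inv_nonneg.2 hsum.le) (hx c), ?_, fun i a b => ?_⟩
      · rw [← mul_sum, inv_mul_cancel₀ hsum.ne']
      · rw [incentiveSum_eq_sum_smul_incentiveVec, hμ]
        exact smul_nonpos_of_nonneg_of_nonpos (inv_nonneg.2 hsum.le) (hle _)
    ext ⟨i, a, b⟩
    have h := htight μ hCE i a b
    rw [incentiveSum_eq_sum_smul_incentiveVec, hμ, Pi.smul_apply, smul_eq_mul,
      mul_eq_zero] at h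
    exact h.resolve_left (inv_ne_zero hsum.ne')

theorem IsTight.exists_dual_single_pos {U : N → (∀ j, C j) → ℝ} (htight : IsTight U)
    (t₀ : Σ i : N, C i × C i) :
    ∃ φ : StrongDual ℝ ((Σ i : N, C i × C i) → ℝ), (∀ c, 0 ≤ φ (incentiveVec U c)) ∧
      (∀ t, 0 ≤ φ (Pi.single t 1)) ∧ 0 < φ (Pi.single t₀ 1) := by
  set gens := Set.range (incentiveVec U) ∪ Set.range fun t => (Pi.single t 1 : _ → ℝ)
  have hb : -Pi.single t₀ 1 ∉ PointedCone.hull ℝ gens := by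
    intro hb
    rw [PointedCone.hull, Submodule.span_union, Submodule.mem_sup] at hb
    obtain ⟨y, hy, z, hz, hyz⟩ := hb
    obtain ⟨x, rfl⟩ := (Submodule.mem_span_range_iff_exists_fun _).1 hy
    have hz0 : 0 ≤ z := (PointedCone.mem_positive ℝ _).1 <| Submodule.span_le.2
      (Set.range_subset_iff.2 fun t => (PointedCone.mem_positive ℝ _).2 (by simp)) hz
    have hxz : ∑ c, (x c : ℝ) • incentiveVec U c = -Pi.single t₀ 1 - z := by
      rw [← eq_sub_of_add_eq hyz]
      rfl
    have hy0 := htight.sum_smul_incentiveVec_eq_zero (x := fun c => x c) (fun c => (x c).2)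
      (hxz ▸ sub_nonpos.2 ((neg_nonpos.2 (by simp)).trans hz0))
    have h := congrFun (hxz.symm.trans hy0) t₀
    simp only [Pi.sub_apply, Pi.neg_apply, Pi.single_eq_same, Pi.zero_apply] at h
    linarith [show 0 ≤ z t₀ from hz0 t₀]
  obtain ⟨φ, hφ, hφb⟩ := PointedCone.exists_dual_of_notMem_hull
    ((Set.finite_range _).union (Set.finite_range _)) hb
  exact ⟨φ, fun c => hφ _ (Or.inl ⟨c, rfl⟩), fun t => hφ _ (Or.inr ⟨t, rfl⟩),
    by simpa using hφb⟩

theorem IsTight.exists_pos_dual {U : N → (∀ j, C j) → ℝ} (htight : IsTight U) :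
    ∃ y : (Σ i : N, C i × C i) → ℝ, (∀ t, 0 < y t) ∧ ∀ c, 0 ≤ y ⬝ᵥ incentiveVec U c := by
  choose φ hφU hφe hφpos using htight.exists_dual_single_pos
  set Φ := ∑ t₀, φ t₀
  refine ⟨fun t => Φ (Pi.single t 1), fun t => ?_, fun c => ?_⟩
  · simp only [Φ, FunLike.coe_sum, Finset.sum_apply]
    exact sum_pos' (fun t₀ _ => hφe t₀ t) ⟨t, mem_univ t, hφpos t⟩
  · have h := dotProduct_apply_single (Φ : _ →ₗ[ℝ] ℝ) (incentiveVec U c)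
    simp only [ContinuousLinearMap.coe_coe] at h
    rw [h]
    simp only [Φ, FunLike.coe_sum, Finset.sum_apply]
    exact sum_nonneg fun t₀ _ => hφU t₀ c

theorem IsTight.exists_pos_dualVector {U : N → (∀ j, C j) → ℝ} (htight : IsTight U) :
    ∃ α, IsDualVector U α ∧ ∀ i a b, 0 < α i a b := by
  obtain ⟨y, hy, hdual⟩ := htight.exists_pos_dual
  set M := 1 + ∑ t, y t
  have hM : 0 < M := add_pos_of_pos_of_nonneg one_pos (sum_nonneg fun t _ => (hy t).le)
  have hrow : ∀ i a, ∑ b, y ⟨i, (a, b)⟩ < M := fun i a =>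
    calc ∑ b, y ⟨i, (a, b)⟩ ≤ ∑ a', ∑ b, y ⟨i, (a', b)⟩ :=
          single_le_sum (f := fun a' => ∑ b, y ⟨i, (a', b)⟩)
            (fun a' _ => sum_nonneg fun b _ => (hy _).le) (mem_univ a)
      _ = ∑ p : C i × C i, y ⟨i, p⟩ := (Fintype.sum_prod_type fun p => y ⟨i, p⟩).symm
      _ ≤ ∑ i', ∑ p : C i' × C i', y ⟨i', p⟩ :=
          single_le_sum (f := fun i' => ∑ p : C i' × C i', y ⟨i', p⟩)
            (fun i' _ => sum_nonneg fun p _ => (hy _).le) (mem_univ i)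
      _ = ∑ t, y t := (Fintype.sum_sigma _).symm
      _ < M := lt_one_add _
  have hpos : ∀ i a b, 0 < uniformize (fun a b => y ⟨i, (a, b)⟩) M a b := fun i =>
    uniformize_pos (fun a b => hy _) (hrow i)
  refine ⟨fun i => uniformize (fun a b => y ⟨i, (a, b)⟩) M,
    ⟨fun i a => ⟨fun b => (hpos i a b).le, sum_uniformize _ _ a⟩, fun c => ?_⟩, hpos⟩
  have hgain : devGain U (fun i => uniformize (fun a b => y ⟨i, (a, b)⟩) M) c
      = (y ⬝ᵥ incentiveVec U c) / M := by
    rw [dotProduct_incentiveVec, sum_div]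
    refine sum_congr rfl fun i _ => ?_
    simpa using sum_uniformize_mul_sub _ _ (fun d => U i (update c i d)) (c i)
  rw [hgain]
  exact div_nonneg (hdual c) hM.le

end Dual

section ProductProfiles

variable {N : Type} [Fintype N] [DecidableEq N] {C : N → Type} [∀ i, Fintype (C i)]

omit [∀ i, Fintype (C i)] in
lemma prod_update_apply (τ : ∀ k, C k → ℝ) (j : N) (ρ : C j → ℝ) (c : ∀ k, C k) :
    ∏ k, update τ j ρ k (c k) = ρ (c j) * ∏ k ∈ univ.erase j, τ k (c k) := by
  rw [← mul_prod_erase univ _ (mem_univ j), update_self]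
  exact congrArg _ (prod_congr rfl fun k hk => by rw [update_of_ne (ne_of_mem_erase hk)])

lemma sum_sum_update_swap (j : N) (G : (∀ k, C k) → C j → ℝ) :
    ∑ c, ∑ d, G (update c j d) (c j) = ∑ c, ∑ d, G c d := by
  have hinv : Involutive fun p : (∀ k, C k) × C j => (update p.1 j p.2, p.1 j) := by
    rintro ⟨c, d⟩
    simp
  simp only [← Fintype.sum_prod_type']
  exact Fintype.sum_equiv hinv.toPerm _ _ fun p => rfl

lemma sum_prod_mul_sum_update (τ : ∀ k, C k → ℝ) (j : N) (P : C j → C j → ℝ)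
    (V : (∀ k, C k) → ℝ) :
    ∑ c, (∏ k, τ k (c k)) * ∑ d, P (c j) d * V (update c j d)
      = ∑ c, (∏ k, update τ j (devImage P (τ j)) k (c k)) * V c := by
  set R : (∀ k, C k) → ℝ := fun c => ∏ k ∈ univ.erase j, τ k (c k)
  have hR : ∀ c d, R (update c j d) = R c := fun c d =>
    prod_congr rfl fun k hk => by rw [update_of_ne (ne_of_mem_erase hk)]
  calc ∑ c, (∏ k, τ k (c k)) * ∑ d, P (c j) d * V (update c j d)
      = ∑ c, ∑ d, (fun c' e => τ j e * P e (c' j) * R c' * V c') (update c j d) (c j) := by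
        refine sum_congr rfl fun c _ => ?_
        rw [← mul_prod_erase univ _ (mem_univ j), mul_sum]
        exact sum_congr rfl fun d _ => by simp only [hR, update_self]; ring
    _ = ∑ c, ∑ e, τ j e * P e (c j) * R c * V c :=
        sum_sum_update_swap j fun c' e => τ j e * P e (c' j) * R c' * V c'
    _ = ∑ c, (∏ k, update τ j (devImage P (τ j)) k (c k)) * V c := by
        refine sum_congr rfl fun c _ => ?_
        rw [prod_update_apply, devImage, sum_mul, sum_mul]

lemma sum_prod_mul_devGain (U : N → (∀ j, C j) → ℝ) (α : ∀ i, C i → C i → ℝ)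
    (τ : ∀ k, C k → ℝ) :
    ∑ c, (∏ k, τ k (c k)) * devGain U α c
      = ∑ j, (mixedPayoff U (update τ j (devImage (α j) (τ j))) j - mixedPayoff U τ j) := by
  simp only [devGain, mul_sum, mul_sub]
  rw [sum_comm]
  refine sum_congr rfl fun j _ => ?_
  rw [sum_sub_distrib, mixedPayoff, mixedPayoff, ← sum_prod_mul_sum_update τ j (α j) (U j)]
  simp only [mul_sum]

end ProductProfiles

section Nash

variable {N : Type} [Fintype N] [DecidableEq N]
  {C : N → Type} [∀ i, Fintype (C i)] [∀ i, DecidableEq (C i)]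

lemma mixedPayoff_update (U : N → (∀ j, C j) → ℝ) (τ : ∀ j, C j → ℝ) (i : N)
    (ρ : C i → ℝ) (k : N) :
    mixedPayoff U (update τ i ρ) k = ∑ d, ρ d * mixedPayoff U (update τ i (dirac d)) k := by
  simp only [mixedPayoff, prod_update_apply, mul_sum]
  rw [sum_comm]
  refine sum_congr rfl fun c _ => ?_
  rw [← sum_mul_dirac ρ (c i), sum_mul, sum_mul]
  exact sum_congr rfl fun d _ => by ring

theorem mixedPayoff_update_dirac_le_sum {U : N → (∀ j, C j) → ℝ} {α : ∀ i, C i → C i → ℝ}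
    (hα : ∀ c, 0 ≤ devGain U α c) {σ : ∀ j, C j → ℝ} (hσ : ∀ j s, 0 ≤ σ j s)
    (hstat : ∀ j, IsStationaryDist (α j) (σ j)) (i : N) (b : C i) :
    mixedPayoff U (update σ i (dirac b)) i
      ≤ ∑ d, α i b d * mixedPayoff U (update σ i (dirac d)) i := by
  have hτ : ∀ k s, 0 ≤ update σ i (dirac b) k s := by
    intro k s
    by_cases hk : k = i
    · subst hk
      simp only [update_self, dirac]
      split_ifs <;> norm_num
    · simpa only [update_of_ne hk] using hσ k s
  -- Only player `i` deviates from a stationary strategy, so only its term survives.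
  have hgain : 0 ≤ ∑ c, (∏ k, update σ i (dirac b) k (c k)) * devGain U α c :=
    sum_nonneg fun c _ => mul_nonneg (prod_nonneg fun k _ => hτ k (c k)) (hα c)
  rw [sum_prod_mul_devGain, sum_eq_single i] at hgain
  · rw [update_self, devImage_dirac, update_idem, mixedPayoff_update U σ i (α i b)] at hgain
    linarith
  · intro j _ hj
    rw [update_of_ne hj, hstat j, ← update_of_ne hj (dirac b) σ, update_eq_self, sub_self]
  · simp

theorem isNash_of_isStationaryDist {U : N → (∀ j, C j) → ℝ} {α : ∀ i, C i → C i → ℝ}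
    (hα : IsDualVector U α) (hpos : ∀ i a b, 0 < α i a b) {σ : ∀ j, C j → ℝ}
    (hσ : ∀ i, IsMixed (σ i)) (hstat : ∀ i, IsStationaryDist (α i) (σ i)) : IsNash U σ := by
  refine ⟨hσ, fun i d => le_of_eq ?_⟩
  have hconst := eq_of_forall_le_sum_mul (hpos i) (fun a => (hα.1 i a).2)
    (mixedPayoff_update_dirac_le_sum hα.2 (fun j => (hσ j).1) hstat i)
  calc mixedPayoff U (update σ i (dirac d)) i
      = ∑ e, σ i e * mixedPayoff U (update σ i (dirac d)) i := by
        rw [← sum_mul, (hσ i).2, one_mul]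
    _ = ∑ e, σ i e * mixedPayoff U (update σ i (dirac e)) i :=
        sum_congr rfl fun e _ => by rw [hconst d e]
    _ = mixedPayoff U σ i := by rw [← mixedPayoff_update, update_eq_self]

end Nash

theorem tight_has_completely_mixed_nash_general
    {N : Type} [Fintype N] [DecidableEq N]
    {C : N → Type} [∀ i, Fintype (C i)] [∀ i, DecidableEq (C i)] [∀ i, Nonempty (C i)]
    (U : ∀ i : N, (∀ j, C j) → ℝ) (htight : IsTight U) :
    ∃ σ : ∀ i, C i → ℝ, IsNash U σ ∧ ∀ (i : N) (cᵢ : C i), 0 < σ i cᵢ := by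
  obtain ⟨α, hα, hpos⟩ := htight.exists_pos_dualVector
  choose σ hmixed hstat hσpos using fun i =>
    exists_pos_isStationaryDist (hpos i) fun a => (hα.1 i a).2
  exact ⟨σ, isNash_of_isStationaryDist hα hpos hmixed hstat, hσpos⟩

/-- Any tight finite game has a completely mixed Nash equilibrium. -/
theorem tight_has_completely_mixed_nash
    {N : Type} [Fintype N] [DecidableEq N] [Nonempty N]
    {C : N → Type} [∀ i, Fintype (C i)] [∀ i, DecidableEq (C i)] [∀ i, Nonempty (C i)]
    (U : ∀ i : N, (∀ j, C j) → ℝ) (htight : IsTight U) :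
    ∃ σ : ∀ i, C i → ℝ, IsNash U σ ∧ ∀ (i : N) (cᵢ : C i), 0 < σ i cᵢ :=
  tight_has_completely_mixed_nash_general U htight
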